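/- For all natural numbers k ≤ d, every occurrence of the value 2^k in S_d is the last element of an occurrence of S_k: if the entry of S_d at index i equals 2^k, then i ≥ 2^{k+1} - 2 and the contiguous sublist of S_d consisting of the 2^{k+1}-1 entries ending at index i equals S_k. -/
import Mathlib


def S : ℕ → List ℕ
  | 0 => [1]
  | k + 1 => S k ++ S k ++ [2 ^ (k + 1)]

lemma S_length (k : ℕ) : (S k).length = 2 ^ (k + 1) - 1 := by
  induction k with
  | zero => simp [S]
  | succ n ih =>
    have h1 : 1 ≤ 2 ^ (n + 1) := Nat.one_le_two_pow
    simp [S, ih, pow_succ]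
    omega

lemma S_le (k : ℕ) : ∀ x ∈ S k, x ≤ 2 ^ k := by
  induction k with
  | zero =>
    intro x hx
    simp [S] at hx
    simp [hx]
  | succ n ih =>
    intro x hx
    simp [S] at hx
    have h2 : 2 ^ n ≤ 2 ^ (n + 1) := Nat.pow_le_pow_right (by norm_num) (by omega)
    rcases hx with h | h
    · exact le_trans (ih x h) h2
    · omega

lemma window_append (l₁ l₂ : List ℕ) (a m : ℕ) (h : a + m ≤ l₁.length) :
    ((l₁ ++ l₂).drop a).take m = (l₁.drop a).take m := by
  rw [List.drop_append_of_le_length (by omega),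
    List.take_append_of_le_length (by simp; omega)]

lemma S_last_unique (k i : ℕ) (hi : (S k)[i]? = some (2 ^ k)) : i = 2 ^ (k + 1) - 2 := by
  cases k with
  | zero =>
    simp [S] at hi
    obtain ⟨hi0, _⟩ := List.getElem?_eq_some_iff.mp hi
    simpa using hi0
  | succ n =>
    have hlen : (S (n + 1)).length = 2 ^ (n + 2) - 1 := S_length (n + 1)
    have hL : (S n).length = 2 ^ (n + 1) - 1 := S_length n
    have h1 : 1 ≤ 2 ^ (n + 1) := Nat.one_le_two_pow
    have hpow : 2 ^ n < 2 ^ (n + 1) := Nat.pow_lt_pow_right (by norm_num) (by omega)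
    have hilt : i < (S (n + 1)).length := (List.getElem?_eq_some_iff.mp hi).1
    rw [show S (n + 1) = S n ++ S n ++ [2 ^ (n + 1)] from rfl] at hi
    rcases lt_or_ge i ((S n ++ S n).length) with hc | hc
    · rw [List.getElem?_append_left hc] at hi
      have hmem : (2 : ℕ) ^ (n + 1) ∈ S n ++ S n := List.mem_of_getElem? hi
      rcases List.mem_append.mp hmem with h | h <;> exact absurd (S_le n _ h) (by omega)
    · rw [List.getElem?_append_right hc] at hi
      have hlt := (List.getElem?_eq_some_iff.mp hi).1
      simp at hlt
      simp [hL, pow_succ] at hc hilt ⊢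
      omega

theorem S_value_ends_appearance (k d : ℕ) (h : k ≤ d) (i : ℕ)
    (hi : (S d)[i]? = some (2 ^ k)) :
    i ≥ 2 ^ (k + 1) - 2 ∧
    ((S d).drop (i + 1 - (2 ^ (k + 1) - 1))).take (2 ^ (k + 1) - 1) = S k := by
  induction d generalizing i with
  | zero =>
    interval_cases k
    simp [S] at hi ⊢
    obtain ⟨hi0, _⟩ := List.getElem?_eq_some_iff.mp hi
    simp at hi0
    subst hi0
    simp [S]
  | succ n ih =>
    have hL : (S n).length = 2 ^ (n + 1) - 1 := S_length n
    have h1n : 1 ≤ 2 ^ (n + 1) := Nat.one_le_two_pow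
    have h1k : 1 ≤ 2 ^ (k + 1) := Nat.one_le_two_pow
    rcases Nat.eq_or_lt_of_le h with he | hlt
    · -- k = n + 1
      subst he
      have := S_last_unique (n + 1) i hi
      subst this
      have hlen : (S (n + 1)).length = 2 ^ (n + 2) - 1 := S_length (n + 1)
      have h2 : 1 ≤ 2 ^ (n + 2) := Nat.one_le_two_pow
      have e : (2:ℕ) ^ (n + 1 + 1) = 2 ^ (n + 2) := rfl
      constructor
      · omega
      · have : 2 ^ (n + 2) - 2 + 1 - (2 ^ (n + 2) - 1) = 0 := by omega
        rw [this, List.drop_zero, ← hlen, List.take_length]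
    · -- k ≤ n
      have hk : k ≤ n := by omega
      have hilt : i < (S (n + 1)).length := (List.getElem?_eq_some_iff.mp hi).1
      rw [show S (n + 1) = S n ++ S n ++ [2 ^ (n + 1)] from rfl] at hi ⊢
      rcases lt_or_ge i ((S n ++ S n).length) with hc | hc
      · rw [List.getElem?_append_left hc] at hi
        rcases lt_or_ge i (S n).length with hc2 | hc2
        · rw [List.getElem?_append_left hc2] at hi
          obtain ⟨hge, hw⟩ := ih hk i hi
          refine ⟨hge, ?_⟩
          rw [window_append _ _ _ _ (by omega)]
          rw [window_append _ _ _ _ (by omega)] at *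
          exact hw
        · rw [List.getElem?_append_right hc2] at hi
          obtain ⟨hge, hw⟩ := ih hk (i - (S n).length) hi
          have hub : i - (S n).length < (S n).length := by simp at hc; omega
          refine ⟨by omega, ?_⟩
          rw [List.append_assoc, List.drop_append]
          have hz : (S n).drop (i + 1 - (2 ^ (k + 1) - 1)) = [] := by
            apply List.drop_eq_nil_of_le; omega
          rw [hz, List.nil_append]
          have harg : i + 1 - (2 ^ (k + 1) - 1) - (S n).length
              = i - (S n).length + 1 - (2 ^ (k + 1) - 1) := by omega
          rw [harg, window_append _ _ _ _ (by omega)]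
          exact hw
      · rw [List.getElem?_append_right hc] at hi
        have hlt2 := (List.getElem?_eq_some_iff.mp hi).1
        have hz : i - (S n ++ S n).length = 0 := by simpa using hlt2
        rw [hz] at hi
        have heq : k = n + 1 := by simpa using hi.symm
        have : 2 ^ k < 2 ^ (n + 1) := Nat.pow_lt_pow_right (by norm_num) (by omega)
        omega
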